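/- Under the same reflected Kaczmarz iteration (α = 2, cyclic row order) applied to a consistent system A x = b, let x_* be the solution minimizing ‖x₀ - x_*‖ over all solutions. Then for every solution x of A x = b and every k, the inner product ⟨x_{k+1} - x_*, x - x_*⟩ = ⟨x_k - x_*, x - x_*⟩. In particular, since ⟨x₀ - x_*, x - x_*⟩ = 0 for all solutions x, one has ⟨x_k - x_*, x - x_*⟩ = 0 for all k, so x_* is the nearest solution to every iterate x_k. -/

import Mathlib

/-!
Each step adds to `x_k` a multiple of a row `A_i`, and every row is orthogonal to the difference
`x - x_*` of two solutions, so `⟨x_k - x_*, x - x_*⟩` does not depend on `k`. At `k = 0` it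
vanishes: the solution set is an affine subspace, and the first-order condition for `x_*` being its
nearest point to `x₀` is `x₀ - x_* ⟂ x - x_*`.
-/

open Matrix

/-- Reinterpret a plain vector as an element of Euclidean space. -/
def toE {n : ℕ} (v : Fin n → ℝ) : EuclideanSpace ℝ (Fin n) := WithLp.toLp 2 v

open scoped InnerProductSpace

theorem inner_eq_zero_of_forall_norm_le_norm_sub_smul {E : Type*} [NormedAddCommGroup E]
    [InnerProductSpace ℝ E] {u v : E} (h : ∀ t : ℝ, ‖u‖ ≤ ‖u - t • v‖) : ⟪u, v⟫_ℝ = 0 := by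
  set c := ⟪u, v⟫_ℝ
  have hquad : ∀ t : ℝ, 2 * t * c ≤ t ^ 2 * ‖v‖ ^ 2 := fun t => by
    have := pow_le_pow_left₀ (norm_nonneg u) (h t) 2
    rw [norm_sub_sq_real, real_inner_smul_right, norm_smul, mul_pow, Real.norm_eq_abs,
      sq_abs] at this
    linarith
  have hN : 0 < ‖v‖ ^ 2 + 1 := by positivity
  -- `t = c / (‖v‖² + 1)` turns `hquad` into `c² (‖v‖² + 2) ≤ 0`.
  have := hquad (c / (‖v‖ ^ 2 + 1))
  field_simp at this
  nlinarith [sq_nonneg c, sq_nonneg ‖v‖]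

theorem inner_sub_eq_zero_of_forall_norm_le_of_mem_fiber {E F : Type*} [NormedAddCommGroup E]
    [InnerProductSpace ℝ E] [AddCommGroup F] [Module ℝ F] (f : E →ₗ[ℝ] F) {x₀ y x : E}
    (hmin : ∀ z, f z = f y → ‖x₀ - y‖ ≤ ‖x₀ - z‖) (hx : f x = f y) :
    ⟪x₀ - y, x - y⟫_ℝ = 0 := by
  refine inner_eq_zero_of_forall_norm_le_norm_sub_smul fun t => ?_
  have hline : f (y + t • (x - y)) = f y := by simp [hx]
  calc ‖x₀ - y‖ ≤ ‖x₀ - (y + t • (x - y))‖ := hmin _ hline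
    _ = ‖x₀ - y - t • (x - y)‖ := by rw [sub_add_eq_sub_sub]

theorem inner_toE_row {m n : ℕ} (A : Matrix (Fin m) (Fin n) ℝ) (i : Fin m)
    (x : EuclideanSpace ℝ (Fin n)) : ⟪toE (A i), x⟫_ℝ = A.mulVec x i := by
  simp [toE, PiLp.inner_apply, mulVec, dotProduct, mul_comm]

theorem inner_toE_row_sub_eq_zero {m n : ℕ} (A : Matrix (Fin m) (Fin n) ℝ) (i : Fin m)
    {x y : EuclideanSpace ℝ (Fin n)} (h : A.mulVec x = A.mulVec y) :
    ⟪toE (A i), x - y⟫_ℝ = 0 := by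
  rw [inner_sub_right, inner_toE_row, inner_toE_row, h, sub_self]

theorem kaczmarz_reflection_orth_general (m n : ℕ) (hm : 0 < m)
    (A : Matrix (Fin m) (Fin n) ℝ) (b : Fin m → ℝ)
    (xs : ℕ → EuclideanSpace ℝ (Fin n))
    (hiter : ∀ k : ℕ,
      xs (k + 1) = xs k +
        (2 * (b ⟨k % m, Nat.mod_lt k hm⟩ -
            ∑ j, A ⟨k % m, Nat.mod_lt k hm⟩ j * xs k j) /
          (∑ j, A ⟨k % m, Nat.mod_lt k hm⟩ j ^ 2)) • toE (A ⟨k % m, Nat.mod_lt k hm⟩))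
    (xstar : EuclideanSpace ℝ (Fin n)) (hstar : A.mulVec xstar = b)
    (hmin : ∀ x : EuclideanSpace ℝ (Fin n), A.mulVec x = b →
      ‖xs 0 - xstar‖ ≤ ‖xs 0 - x‖) :
    (∀ x : EuclideanSpace ℝ (Fin n), A.mulVec x = b → ∀ k,
      (inner ℝ (xs (k + 1) - xstar) (x - xstar) : ℝ) =
        inner ℝ (xs k - xstar) (x - xstar)) ∧
    (∀ x : EuclideanSpace ℝ (Fin n), A.mulVec x = b → ∀ k,
      (inner ℝ (xs k - xstar) (x - xstar) : ℝ) = 0) := by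
  have hstep : ∀ x : EuclideanSpace ℝ (Fin n), A.mulVec x = b → ∀ k,
      ⟪xs (k + 1) - xstar, x - xstar⟫_ℝ = ⟪xs k - xstar, x - xstar⟫_ℝ := by
    intro x hx k
    rw [hiter k, add_sub_right_comm, inner_add_left, real_inner_smul_left,
      inner_toE_row_sub_eq_zero A _ (hx.trans hstar.symm), mul_zero, add_zero]
  refine ⟨hstep, fun x hx k => ?_⟩
  induction k with
  | zero =>
    let f := A.mulVecLin ∘ₗ (WithLp.linearEquiv 2 ℝ (Fin n → ℝ)).toLinearMap
    exact inner_sub_eq_zero_of_forall_norm_le_of_mem_fiber f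
      (fun z hz => hmin z (hz.trans hstar)) (hx.trans hstar.symm)
  | succ k ih => rw [hstep x hx k, ih]

/-- for the reflected Kaczmarz iteration applied to a consistent
system, with `x_*` the solution nearest to `x₀`, the inner product
`⟨x_k - x_*, x - x_*⟩` is invariant in `k` for every solution `x`; in
particular it is always `0`, so `x_*` is the nearest solution to every iterate. -/
theorem kaczmarz_reflection_orth (m n : ℕ) (hm : 0 < m)
    (A : Matrix (Fin m) (Fin n) ℝ) (b : Fin m → ℝ)
    (hA : ∀ i, A i ≠ 0)
    (xs : ℕ → EuclideanSpace ℝ (Fin n))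
    (hiter : ∀ k : ℕ,
      xs (k + 1) = xs k +
        (2 * (b ⟨k % m, Nat.mod_lt k hm⟩ -
            ∑ j, A ⟨k % m, Nat.mod_lt k hm⟩ j * xs k j) /
          (∑ j, A ⟨k % m, Nat.mod_lt k hm⟩ j ^ 2)) • toE (A ⟨k % m, Nat.mod_lt k hm⟩))
    (xstar : EuclideanSpace ℝ (Fin n)) (hstar : A.mulVec xstar = b)
    (hmin : ∀ x : EuclideanSpace ℝ (Fin n), A.mulVec x = b →
      ‖xs 0 - xstar‖ ≤ ‖xs 0 - x‖) :
    (∀ x : EuclideanSpace ℝ (Fin n), A.mulVec x = b → ∀ k,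
      (inner ℝ (xs (k + 1) - xstar) (x - xstar) : ℝ) =
        inner ℝ (xs k - xstar) (x - xstar)) ∧
    (∀ x : EuclideanSpace ℝ (Fin n), A.mulVec x = b → ∀ k,
      (inner ℝ (xs k - xstar) (x - xstar) : ℝ) = 0) :=
  kaczmarz_reflection_orth_general m n hm A b xs hiter xstar hstar hmin
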